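/- Let Λ > 0. For every ℓ with 0 < ℓ < 2·arsinh(1) and all s, s₀ ∈ [−X(ℓ), X(ℓ)] with |s − s₀| ≤ Λ, the conformal factor ρ_ℓ(s) = ℓ/(2π·cos(ℓ·s/(2π))) satisfies ρ_ℓ(s) ≤ e^{Λ/π}·ρ_ℓ(s₀). -/

import Mathlib

/-- Half-length of the hyperbolic collar around a geodesic of length `ℓ`. -/
noncomputable def collarX (ℓ : ℝ) : ℝ :=
  2 * Real.pi / ℓ * (Real.pi / 2 - Real.arctan (Real.sinh (ℓ / 2)))

/-- Conformal factor of the hyperbolic collar. -/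
noncomputable def collarRho (ℓ s : ℝ) : ℝ :=
  ℓ / (2 * Real.pi * Real.cos (ℓ * s / (2 * Real.pi)))

/-!
With `c = ℓ / (2π)` we have `log ρ_ℓ(s) = const - log cos (c s)`, whose derivative is
`c tan (c s)`. On the collar `|c s| ≤ A := π/2 - arctan (sinh (ℓ/2))` (this is `collarAngle`),
and `tan A = 1 / sinh (ℓ/2)`, so `|(log ρ_ℓ)'| ≤ (ℓ/2) / (π sinh (ℓ/2)) ≤ 1/π` because
`x ≤ sinh x` for `x ≥ 0`. The mean value theorem then bounds `log ρ_ℓ(s) - log ρ_ℓ(s₀)` by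
`|s - s₀| / π ≤ Λ / π`.
-/

open Real Set

namespace Real

theorem abs_tan_le_tan {A u : ℝ} (hA : A < π / 2) (hu : u ∈ Icc (-A) A) :
    |tan u| ≤ tan A := by
  have hmem : Icc (-A) A ⊆ Ioo (-(π / 2)) (π / 2) := fun v hv =>
    ⟨by linarith [hv.1], by linarith [hv.2]⟩
  have hA₀ : -A ≤ A := hu.1.trans hu.2
  have hmono := strictMonoOn_tan.monotoneOn.mono hmem
  rw [abs_le, ← tan_neg]
  exact ⟨hmono ⟨le_rfl, hA₀⟩ hu hu.1, hmono hu ⟨hA₀, le_rfl⟩ hu.2⟩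

theorem cos_pos_of_mem_Icc {A u : ℝ} (hA : A < π / 2) (hu : u ∈ Icc (-A) A) : 0 < cos u :=
  cos_pos_of_mem_Ioo ⟨by linarith [hu.1], by linarith [hu.2]⟩

theorem abs_log_cos_sub_le {A u v : ℝ} (hA : A < π / 2) (hu : u ∈ Icc (-A) A)
    (hv : v ∈ Icc (-A) A) : |log (cos u) - log (cos v)| ≤ tan A * |u - v| := by
  have hderiv : ∀ w ∈ Icc (-A) A,
      HasDerivWithinAt (fun w => log (cos w)) (-tan w) (Icc (-A) A) w := by
    intro w hw
    rw [tan_eq_sin_div_cos, ← neg_div]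
    exact ((hasDerivAt_cos w).log (cos_pos_of_mem_Icc hA hw).ne').hasDerivWithinAt
  have hbound : ∀ w ∈ Icc (-A) A, ‖-tan w‖ ≤ tan A := fun w hw => by
    rw [norm_neg, norm_eq_abs]; exact abs_tan_le_tan hA hw
  simpa only [norm_eq_abs] using
    (convex_Icc (-A) A).norm_image_sub_le_of_norm_hasDerivWithin_le hderiv hbound hv hu

theorem le_exp_mul_of_log_sub_le {a b t : ℝ} (ha : 0 < a) (hb : 0 < b)
    (h : log a - log b ≤ t) : a ≤ exp t * b := by
  rw [← log_le_log_iff ha (by positivity), log_mul (exp_pos t).ne' hb.ne', log_exp]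
  linarith

end Real

noncomputable def collarAngle (ℓ : ℝ) : ℝ := π / 2 - arctan (sinh (ℓ / 2))

theorem collarAngle_lt_pi_div_two {ℓ : ℝ} (hℓ : 0 < ℓ) : collarAngle ℓ < π / 2 := by
  have : 0 < arctan (sinh (ℓ / 2)) := arctan_pos.2 (sinh_pos_iff.2 (half_pos hℓ))
  unfold collarAngle; linarith

theorem tan_collarAngle (ℓ : ℝ) : tan (collarAngle ℓ) = (sinh (ℓ / 2))⁻¹ := by
  rw [collarAngle, tan_pi_div_two_sub, tan_arctan]

theorem div_two_pi_mul_collarX {ℓ : ℝ} (hℓ : ℓ ≠ 0) :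
    ℓ / (2 * π) * collarX ℓ = collarAngle ℓ := by
  rw [collarX, collarAngle]
  field_simp

theorem div_two_pi_mul_mem_Icc_collarAngle {ℓ s : ℝ} (hℓ : 0 < ℓ)
    (hs : s ∈ Icc (-collarX ℓ) (collarX ℓ)) :
    ℓ * s / (2 * π) ∈ Icc (-collarAngle ℓ) (collarAngle ℓ) := by
  have hc : 0 ≤ ℓ / (2 * π) := by positivity
  rw [mul_div_right_comm, ← div_two_pi_mul_collarX hℓ.ne', ← mul_neg]
  exact ⟨mul_le_mul_of_nonneg_left hs.1 hc, mul_le_mul_of_nonneg_left hs.2 hc⟩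

theorem div_two_pi_mul_tan_collarAngle_le {ℓ : ℝ} (hℓ : 0 < ℓ) :
    ℓ / (2 * π) * tan (collarAngle ℓ) ≤ 1 / π := by
  have hsinh : ℓ / 2 ≤ sinh (ℓ / 2) := self_le_sinh_iff.2 (by positivity)
  rw [tan_collarAngle, ← div_eq_mul_inv, div_div, div_le_div_iff₀ (by positivity) pi_pos]
  nlinarith [pi_pos]

theorem collarRho_pos {ℓ s : ℝ} (hℓ : 0 < ℓ) (hs : s ∈ Icc (-collarX ℓ) (collarX ℓ)) :
    0 < collarRho ℓ s := by
  have := cos_pos_of_mem_Icc (collarAngle_lt_pi_div_two hℓ)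
    (div_two_pi_mul_mem_Icc_collarAngle hℓ hs)
  unfold collarRho; positivity

theorem abs_log_collarRho_sub_le {ℓ s s₀ : ℝ} (hℓ : 0 < ℓ)
    (hs : s ∈ Icc (-collarX ℓ) (collarX ℓ))
    (hs₀ : s₀ ∈ Icc (-collarX ℓ) (collarX ℓ)) :
    |log (collarRho ℓ s) - log (collarRho ℓ s₀)| ≤ |s - s₀| / π := by
  have hA := collarAngle_lt_pi_div_two hℓ
  have hu := div_two_pi_mul_mem_Icc_collarAngle hℓ hs
  have hv := div_two_pi_mul_mem_Icc_collarAngle hℓ hs₀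
  have hlog : ∀ x, 0 < cos (ℓ * x / (2 * π)) →
      log (collarRho ℓ x) = log ℓ - log (2 * π) - log (cos (ℓ * x / (2 * π))) := by
    intro x hx
    rw [collarRho, log_div hℓ.ne' (by positivity), log_mul (by positivity) hx.ne']
    ring
  rw [hlog s (cos_pos_of_mem_Icc hA hu), hlog s₀ (cos_pos_of_mem_Icc hA hv)]
  have hdiff : ℓ * s₀ / (2 * π) - ℓ * s / (2 * π) = ℓ / (2 * π) * (s₀ - s) := by ring
  calc _ = |log (cos (ℓ * s₀ / (2 * π))) - log (cos (ℓ * s / (2 * π)))| := by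
        congr 1; ring
    _ ≤ tan (collarAngle ℓ) * |ℓ * s₀ / (2 * π) - ℓ * s / (2 * π)| :=
        abs_log_cos_sub_le hA hv hu
    _ = ℓ / (2 * π) * tan (collarAngle ℓ) * |s - s₀| := by
        rw [hdiff, abs_mul, abs_of_nonneg (by positivity), abs_sub_comm]
        ring
    _ ≤ 1 / π * |s - s₀| := by gcongr; exact div_two_pi_mul_tan_collarAngle_le hℓ
    _ = |s - s₀| / π := by ring

theorem collarRho_comparable_general (Λ : ℝ) (ℓ : ℝ) (h0 : 0 < ℓ) (s s₀ : ℝ)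
    (hs : s ∈ Set.Icc (-(collarX ℓ)) (collarX ℓ))
    (hs₀ : s₀ ∈ Set.Icc (-(collarX ℓ)) (collarX ℓ))
    (hd : |s - s₀| ≤ Λ) :
    collarRho ℓ s ≤ Real.exp (Λ / Real.pi) * collarRho ℓ s₀ := by
  refine le_exp_mul_of_log_sub_le (collarRho_pos h0 hs) (collarRho_pos h0 hs₀) ?_
  calc log (collarRho ℓ s) - log (collarRho ℓ s₀)
      ≤ |log (collarRho ℓ s) - log (collarRho ℓ s₀)| := le_abs_self _
    _ ≤ |s - s₀| / π := abs_log_collarRho_sub_le h0 hs hs₀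
    _ ≤ Λ / π := by gcongr

/-- The conformal factor varies by at most a factor `e^{Λ/π}` over distances `≤ Λ`. -/
theorem collarRho_comparable (Λ : ℝ) (hΛ : 0 < Λ) (ℓ : ℝ) (h0 : 0 < ℓ)
    (h1 : ℓ < 2 * Real.arsinh 1) (s s₀ : ℝ)
    (hs : s ∈ Set.Icc (-(collarX ℓ)) (collarX ℓ))
    (hs₀ : s₀ ∈ Set.Icc (-(collarX ℓ)) (collarX ℓ))
    (hd : |s - s₀| ≤ Λ) :
    collarRho ℓ s ≤ Real.exp (Λ / Real.pi) * collarRho ℓ s₀ :=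
  collarRho_comparable_general Λ ℓ h0 s s₀ hs hs₀ hd
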